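/- Let q be a prime and a, b, c, d ∈ F_q with a² + b² + c² + d² = 0. Let C be a self-dual [2n, n] code over F_q with generator matrix rows g_1, ..., g_n, and λ_1, ..., λ_n ∈ F_q. Extend each row g_i by four coordinates: (λ_i a, λ_i b, λ_i c, λ_i d) for odd i and (-λ_i b, λ_i a, -λ_i d, λ_i c) for even i. Then any two extended rows are orthogonal, and each extended row is orthogonal to itself; hence these rows generate a self-orthogonal code of length 2n+4. -/

import Mathlib

open Matrix

/-- The Euclidean dual of a linear code `C ⊆ F^ι`. -/
def dualCode {ι : Type*} [Fintype ι] (F : Type*) [Field F] (C : Submodule F (ι → F)) :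
    Submodule F (ι → F) where
  carrier := {y | ∀ x ∈ C, ∑ i, x i * y i = 0}
  zero_mem' := by intro x hx; simp
  add_mem' := by
    intro a b ha hb x hx
    simp [mul_add, Finset.sum_add_distrib, ha x hx, hb x hx]
  smul_mem' := by
    intro c a ha x hx
    simp only [Pi.smul_apply, smul_eq_mul, Set.mem_setOf_eq]
    calc ∑ i, x i * (c * a i) = c * ∑ i, x i * a i := by
          rw [Finset.mul_sum]; exact Finset.sum_congr rfl fun i _ => by ring
      _ = 0 := by rw [ha x hx, mul_zero]

/-- The linear code generated by a matrix `G` (its row space). -/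
def rowSpan {κ ι F : Type*} [Field F] (G : Matrix κ ι F) : Submodule F (ι → F) :=
  Submodule.span F (Set.range G)

section

variable {κ ι F : Type*} [Fintype ι] [Field F]

theorem rowSpan_le_dualCode_iff (G : Matrix κ ι F) :
    rowSpan G ≤ dualCode F (rowSpan G) ↔ ∀ i j, G i ⬝ᵥ G j = 0 := by
  constructor
  · intro h i j
    exact h (Submodule.subset_span ⟨j, rfl⟩) (G i) (Submodule.subset_span ⟨i, rfl⟩)
  · intro h
    refine Submodule.span_le.2 ?_
    rintro _ ⟨j, rfl⟩ x hx
    change x ⬝ᵥ G j = 0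
    induction hx using Submodule.span_induction with
    | mem x hx => obtain ⟨i, rfl⟩ := hx; exact h i j
    | zero => exact zero_dotProduct _
    | add u v _ _ hu hv => rw [add_dotProduct, hu, hv, add_zero]
    | smul r u _ hu => rw [smul_dotProduct, hu, smul_zero]

end

theorem extension_dotProduct_eq_zero {R : Type*} [CommRing R] {a b c d : R}
    (h : a ^ 2 + b ^ 2 + c ^ 2 + d ^ 2 = 0) (x y : R) (s t : Prop) [Decidable s] [Decidable t] :
    (if s then ![x * a, x * b, x * c, x * d] else ![-(x * b), x * a, -(x * d), x * c]) ⬝ᵥ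
      (if t then ![y * a, y * b, y * c, y * d] else ![-(y * b), y * a, -(y * d), y * c]) = 0 := by
  split_ifs <;> simp only [dotProduct, Fin.sum_univ_four, Fin.isValue, cons_val_zero, cons_val_one,
    cons_val]
  · linear_combination x * y * h
  · ring
  · ring
  · linear_combination x * y * h

/-- extending each row `gᵢ` of a generator matrix of a self-dual code by
`(λᵢa, λᵢb, λᵢc, λᵢd)` for odd rows and `(-λᵢb, λᵢa, -λᵢd, λᵢc)` for even rows, where
`a² + b² + c² + d² = 0`, yields pairwise orthogonal rows generating a self-orthogonal
code of length `2n+4`. -/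
theorem stmt_9 {q n : ℕ} [Fact (Nat.Prime q)]
    (a b c d : ZMod q) (habcd : a ^ 2 + b ^ 2 + c ^ 2 + d ^ 2 = 0)
    (G : Matrix (Fin n) (Fin (2 * n)) (ZMod q))
    (hsd : rowSpan G = dualCode (ZMod q) (rowSpan G))
    (lam : Fin n → ZMod q)
    (G' : Matrix (Fin n) (Fin (2 * n) ⊕ Fin 4) (ZMod q))
    (hG' : ∀ i, G' i = Sum.elim (G i)
      (if Even i.val then ![lam i * a, lam i * b, lam i * c, lam i * d]
       else ![-(lam i * b), lam i * a, -(lam i * d), lam i * c])) :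
    (∀ i j, ∑ k, G' i k * G' j k = 0) ∧
      rowSpan G' ≤ dualCode (ZMod q) (rowSpan G') := by
  have hG : ∀ i j, G i ⬝ᵥ G j = 0 := (rowSpan_le_dualCode_iff G).1 hsd.le
  have horth : ∀ i j, G' i ⬝ᵥ G' j = 0 := by
    intro i j
    rw [hG' i, hG' j, sumElim_dotProduct_sumElim, hG i j, zero_add]
    exact extension_dotProduct_eq_zero habcd _ _ _ _
  exact ⟨horth, (rowSpan_le_dualCode_iff G').2 horth⟩
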